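/- arXiv:2207.03259 — 6 statements merged into one kernel-verified Lean document; each statement's English description precedes it below -/
import Mathlib

section
/- Let T be a group and G ≤ T a subgroup that is not a cyclic p-group and contains a unique minimal normal subgroup S. Then there exists H ≤ T with H' = G (the derived subgroup of H equals G) if and only if there exists a subgroup K of N_T(S)/S with K' = G/S. -/
/-!
If `H' = G`, then `H` normalizes `G`, so conjugation by `H` permutes the nontrivial normal
subgroups of `G` and fixes their least member `S`; hence `H ≤ N_T(S)` and the image of `H` in
`N_T(S)/S` has derived subgroup `G/S`. Conversely, the preimage `H` in `N_T(S)` of a `K` with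
`K' = G/S` satisfies `H' S = G`, and `H'` is normal in `G ≤ H`. If `H' ≠ 1` it contains `S`, so
`H' = G`; if `H' = 1`, then `G = S` is abelian and has no nontrivial proper normal subgroup, so
it is cyclic of prime order, which is excluded.
-/

theorem IsSimpleGroup.isCyclic_and_isPGroup {α : Type*} [Group α] [IsMulCommutative α]
    [IsSimpleGroup α] : IsCyclic α ∧ ∃ p : ℕ, p.Prime ∧ IsPGroup p α := by
  have hp := Group.is_simple_iff_prime_card.mp ‹IsSimpleGroup α›
  have : Fact (Nat.card α).Prime := ⟨hp⟩
  exact ⟨isCyclic_of_prime_card rfl, _, hp, IsPGroup.of_card (pow_one _).symm⟩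

namespace Subgroup

variable {T : Type*} [Group T]

theorem commutator_subgroupOf {H N : Subgroup T} (hHN : H ≤ N) :
    ⁅H.subgroupOf N, H.subgroupOf N⁆ = ⁅H, H⁆.subgroupOf N := by
  apply map_injective N.subtype_injective
  rw [map_commutator, subgroupOf_map_subtype, subgroupOf_map_subtype, inf_of_le_left hHN,
    inf_of_le_left ((commutator_le_self H).trans hHN)]

theorem map_mk'_subgroupOf_eq_iff {A B S N : Subgroup T} [(S.subgroupOf N).Normal]
    (hA : A ≤ N) (hB : B ≤ N) (hS : S ≤ N) :
    (A.subgroupOf N).map (QuotientGroup.mk' (S.subgroupOf N)) =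
        (B.subgroupOf N).map (QuotientGroup.mk' (S.subgroupOf N)) ↔ A ⊔ S = B ⊔ S := by
  have hsup : ∀ C ≤ N, (C.subgroupOf N ⊔ S.subgroupOf N).map N.subtype = C ⊔ S := by
    intro C hC
    rw [map_sup, subgroupOf_map_subtype, subgroupOf_map_subtype, inf_of_le_left hC,
      inf_of_le_left hS]
  rw [map_eq_map_iff, QuotientGroup.ker_mk', ← hsup A hA, ← hsup B hB]
  exact (map_injective N.subtype_injective).eq_iff.symm

theorem normalizer_le_normalizer_of_minimal_normal {G S : Subgroup T} (hSG : S ≤ G)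
    (hSbot : S ≠ ⊥) (hSnormal : (S.subgroupOf G).Normal)
    (hmono : ∀ N : Subgroup T, N ≤ G → N ≠ ⊥ → (N.subgroupOf G).Normal → S ≤ N) :
    normalizer (G : Set T) ≤ normalizer (S : Set T) := by
  have le_conj : ∀ g ∈ normalizer (G : Set T), S ≤ S.map (MulAut.conj g) := by
    intro g hg
    have hG : G.map (MulAut.conj g) = G := mem_normalizer_iff_map_conj_eq.mp hg
    have hSG' : S.map (MulAut.conj g) ≤ G := hG ▸ map_mono hSG
    refine hmono _ hSG' ((map_eq_bot_iff_of_injective _ (MulAut.conj g).injective).not.mpr hSbot) ?_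
    rw [normal_subgroupOf_iff_le_normalizer hSG',
      ← map_normalizer_eq_of_bijective _ (MulAut.conj g).bijective]
    calc G = G.map (MulAut.conj g) := hG.symm
      _ ≤ _ := map_mono ((normal_subgroupOf_iff_le_normalizer hSG).mp hSnormal)
  intro g hg
  refine mem_normalizer_iff_map_conj_eq.mpr (le_antisymm ?_ (le_conj g hg))
  rintro _ ⟨s, hs, rfl⟩
  obtain ⟨t, ht, hts⟩ := le_conj g⁻¹ (inv_mem hg) hs
  simpa [← hts, mul_assoc] using ht

theorem isSimpleGroup_of_forall_normal_le {G : Subgroup T} (hG : G ≠ ⊥)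
    (hmono : ∀ N : Subgroup T, N ≤ G → N ≠ ⊥ → (N.subgroupOf G).Normal → G ≤ N) :
    IsSimpleGroup G :=
  Subgroup.isSimpleGroup_iff.mpr ⟨hG, fun N hNG hN ↦
    or_iff_not_imp_left.mpr fun hNbot ↦ le_antisymm hNG (hmono N hNG hNbot hN)⟩

theorem exists_commutator_sup_eq_of_commutator_eq_map {G S N : Subgroup T}
    [(S.subgroupOf N).Normal] (hSG : S ≤ G) (hGN : G ≤ N) {K : Subgroup (N ⧸ S.subgroupOf N)}
    (hK : ⁅K, K⁆ = (G.subgroupOf N).map (QuotientGroup.mk' (S.subgroupOf N))) :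
    ∃ H : Subgroup T, G ≤ H ∧ ⁅H, H⁆ ⊔ S = G := by
  set π := QuotientGroup.mk' (S.subgroupOf N)
  set H := (K.comap π).map N.subtype
  have hHN : H ≤ N := map_subtype_le _
  have hSH : S ≤ H := by
    calc S = (S.subgroupOf N).map N.subtype := by
          rw [subgroupOf_map_subtype, inf_of_le_left (hSG.trans hGN)]
      _ ≤ H := map_mono ((QuotientGroup.ker_mk' (S.subgroupOf N)).ge.trans (ker_le_comap π K))
  have hDS : ⁅H, H⁆ ⊔ S = G := by
    have hmap : (⁅H, H⁆.subgroupOf N).map π = (G.subgroupOf N).map π := by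
      have hH : H.subgroupOf N = K.comap π := comap_map_eq_self_of_injective N.subtype_injective _
      rw [← commutator_subgroupOf hHN, hH, map_commutator,
        map_comap_eq_self_of_surjective (QuotientGroup.mk'_surjective _), hK]
    rw [(map_mk'_subgroupOf_eq_iff ((commutator_le_self H).trans hHN) hGN (hSG.trans hGN)).mp hmap,
      sup_eq_left.mpr hSG]
  exact ⟨H, hDS.ge.trans (sup_le (commutator_le_self H) hSH), hDS⟩

theorem commutator_eq_of_commutator_sup_eq {G H S : Subgroup T} (hSbot : S ≠ ⊥)
    (hnotcyc : ¬ (IsCyclic G ∧ ∃ p : ℕ, p.Prime ∧ IsPGroup p G))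
    (hmono : ∀ N : Subgroup T, N ≤ G → N ≠ ⊥ → (N.subgroupOf G).Normal → S ≤ N)
    (hGH : G ≤ H) (hDS : ⁅H, H⁆ ⊔ S = G) : ⁅H, H⁆ = G := by
  have hDG : ⁅H, H⁆ ≤ G := hDS ▸ le_sup_left
  by_cases hbot : ⁅H, H⁆ = ⊥
  · rw [hbot, bot_sup_eq] at hDS
    subst hDS
    have : IsMulCommutative S :=
      commutator_self_eq_bot_iff.mp (eq_bot_iff.mpr (hbot ▸ commutator_mono hGH hGH))
    have : IsSimpleGroup S := isSimpleGroup_of_forall_normal_le hSbot hmono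
    exact (hnotcyc IsSimpleGroup.isCyclic_and_isPGroup).elim
  · have hDnormal : (⁅H, H⁆.subgroupOf G).Normal :=
      (normal_subgroupOf_iff_le_normalizer hDG).mpr (hGH.trans (normalizer_commutator_ge_left H H))
    exact le_antisymm hDG (hDS ▸ sup_le le_rfl (hmono _ hDG hbot hDnormal))

end Subgroup

/-- Lemma 2.2(1): Let `T` be a group and `G ≤ T` a subgroup that is not a cyclic `p`-group
and contains a unique minimal normal subgroup `S` (i.e. `S` is a nontrivial normal subgroup
of `G` contained in every nontrivial normal subgroup of `G`).  Then `G` is integrable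
within `T` iff `G/S` is integrable within `N_T(S)/S`. -/
theorem stmt0 {T : Type*} [Group T] (G S : Subgroup T) (hSG : S ≤ G)
    (hnotcyc : ¬ (IsCyclic G ∧ ∃ p : ℕ, p.Prime ∧ IsPGroup p G))
    (hSbot : S ≠ ⊥) (hSnormal : (S.subgroupOf G).Normal)
    (hmono : ∀ N : Subgroup T, N ≤ G → N ≠ ⊥ → (N.subgroupOf G).Normal → S ≤ N) :
    (∃ H : Subgroup T, ⁅H, H⁆ = G) ↔
      (∃ K : Subgroup ((Subgroup.normalizer (S : Set T)) ⧸ S.subgroupOf (Subgroup.normalizer (S : Set T))),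
        ⁅K, K⁆ = (G.subgroupOf (Subgroup.normalizer (S : Set T))).map
          (QuotientGroup.mk' (S.subgroupOf (Subgroup.normalizer (S : Set T))))) := by
  constructor
  · rintro ⟨H, hH⟩
    have hHN : H ≤ Subgroup.normalizer (S : Set T) := by
      refine (Subgroup.normalizer_commutator_ge_left H H).trans ?_
      rw [hH]
      exact Subgroup.normalizer_le_normalizer_of_minimal_normal hSG hSbot hSnormal hmono
    exact ⟨(H.subgroupOf _).map (QuotientGroup.mk' _),
      by rw [← Subgroup.map_commutator, Subgroup.commutator_subgroupOf hHN, hH]⟩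
  · rintro ⟨K, hK⟩
    have hGN := (Subgroup.normal_subgroupOf_iff_le_normalizer hSG).mp hSnormal
    obtain ⟨H, hGH, hDS⟩ := Subgroup.exists_commutator_sup_eq_of_commutator_eq_map hSG hGN hK
    exact ⟨H, Subgroup.commutator_eq_of_commutator_sup_eq hSbot hnotcyc hmono hGH hDS⟩
end

section
/- Let T be a group and G ≤ T. If G admits a nontrivial characteristic perfect subgroup K, then G is integrable within T if and only if G/K is integrable within N_T(K)/K. -/
/-!
Conjugation by an element normalizing `G` restricts to an automorphism of `G`, so it preserves
the characteristic subgroup `K`; hence `N_T(G) ≤ N_T(K)`. If `H' = G`, then `H` normalizes `G`,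
so `H ≤ N_T(K)` and the image of `H` in `N_T(K)/K` has derived subgroup `G/K`. Conversely, if
`Q' = G/K`, let `H` be the preimage of `Q` in `N_T(K)`. It contains `K`, and `K` is perfect, so
`K ≤ H'`; as `H'` and `G` both contain `K` and have the same image `Q' = G/K`, we get `H' = G`.
-/

open Subgroup

namespace Subgroup

variable {T : Type*} [Group T]

theorem normalizer_le_normalizer_of_characteristic {G K : Subgroup T} (hKG : K ≤ G)
    [hK : (K.subgroupOf G).Characteristic] :
    normalizer (G : Set T) ≤ normalizer (K : Set T) := by
  rw [le_normalizer_iff]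
  intro n hn k hk
  let conjG : G ≃* G := ((MulAut.conj n).subgroupMap G).trans
    (MulEquiv.subgroupCongr (mem_normalizer_iff_map_conj_eq.mp hn))
  exact characteristic_iff_le_comap.mp hK conjG (show ⟨k, hKG hk⟩ ∈ K.subgroupOf G from hk)

theorem commutator_subgroupOf_s1 {A B C : Subgroup T} (hA : A ≤ C) (hB : B ≤ C) :
    ⁅A.subgroupOf C, B.subgroupOf C⁆ = ⁅A, B⁆.subgroupOf C := by
  have hAB : ⁅A, B⁆ ≤ C := (commutator_mono hA hB).trans (commutator_le_self C)
  apply map_injective C.subtype_injective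
  rw [map_commutator, map_subgroupOf_eq_of_le hA, map_subgroupOf_eq_of_le hB,
    map_subgroupOf_eq_of_le hAB]

theorem commutator_comap_eq_of_perfect_ker {A B : Type*} [Group A] [Group B] {f : A →* B}
    (hf : Function.Surjective f) (hker : ⁅f.ker, f.ker⁆ = f.ker) {L : Subgroup A}
    (hL : f.ker ≤ L) {Q : Subgroup B} (hQ : ⁅Q, Q⁆ = L.map f) :
    ⁅Q.comap f, Q.comap f⁆ = L := by
  have hkerQ : f.ker ≤ Q.comap f := MonoidHom.ker_le_comap f Q
  have hkerQ' : f.ker ≤ ⁅Q.comap f, Q.comap f⁆ :=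
    calc f.ker = ⁅f.ker, f.ker⁆ := hker.symm
      _ ≤ ⁅Q.comap f, Q.comap f⁆ := commutator_mono hkerQ hkerQ
  rw [← comap_map_eq_self hkerQ', ← comap_map_eq_self hL, map_commutator,
    map_comap_eq_self_of_surjective hf, hQ]

end Subgroup

theorem stmt1_general {T : Type*} [Group T] (G K : Subgroup T) (hKG : K ≤ G)
    (hchar : (K.subgroupOf G).Characteristic)
    (hperf : ⁅K, K⁆ = K) :
    (∃ H : Subgroup T, ⁅H, H⁆ = G) ↔
      (∃ Q : Subgroup ((Subgroup.normalizer (K : Set T)) ⧸ K.subgroupOf (Subgroup.normalizer (K : Set T))),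
        ⁅Q, Q⁆ = (G.subgroupOf (Subgroup.normalizer (K : Set T))).map
          (QuotientGroup.mk' (K.subgroupOf (Subgroup.normalizer (K : Set T))))) := by
  set N := normalizer (K : Set T)
  set π := QuotientGroup.mk' (K.subgroupOf N)
  have hGN : normalizer (G : Set T) ≤ N := normalizer_le_normalizer_of_characteristic hKG
  constructor
  · rintro ⟨H, hH⟩
    have hHG : H ≤ normalizer (G : Set T) := hH ▸ normalizer_commutator_ge_left H H
    refine ⟨(H.subgroupOf N).map π, ?_⟩
    rw [← map_commutator, commutator_subgroupOf_s1 (hHG.trans hGN) (hHG.trans hGN), hH]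
  · rintro ⟨Q, hQ⟩
    have hker : π.ker = K.subgroupOf N := QuotientGroup.ker_mk' _
    have hker_perfect : ⁅π.ker, π.ker⁆ = π.ker := by
      rw [hker, commutator_subgroupOf_s1 le_normalizer le_normalizer, hperf]
    have hkerG : π.ker ≤ G.subgroupOf N := hker.symm ▸ subgroupOf_mono N hKG
    refine ⟨(Q.comap π).map N.subtype, ?_⟩
    rw [← map_commutator, commutator_comap_eq_of_perfect_ker (QuotientGroup.mk'_surjective _)
      hker_perfect hkerG hQ, map_subgroupOf_eq_of_le (le_normalizer.trans hGN)]

/-- Lemma 2.2(2): If `G ≤ T` admits a nontrivial characteristic perfect subgroup `K`,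
then `G` is integrable within `T` iff `G/K` is integrable within `N_T(K)/K`. -/
theorem stmt1 {T : Type*} [Group T] (G K : Subgroup T) (hKG : K ≤ G)
    (hKbot : K ≠ ⊥) (hchar : (K.subgroupOf G).Characteristic)
    (hperf : ⁅K, K⁆ = K) :
    (∃ H : Subgroup T, ⁅H, H⁆ = G) ↔
      (∃ Q : Subgroup ((Subgroup.normalizer (K : Set T)) ⧸ K.subgroupOf (Subgroup.normalizer (K : Set T))),
        ⁅Q, Q⁆ = (G.subgroupOf (Subgroup.normalizer (K : Set T))).map
          (QuotientGroup.mk' (K.subgroupOf (Subgroup.normalizer (K : Set T))))) :=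
  stmt1_general G K hKG hchar hperf
end

section
/- Let A = ⟨x, y⟩ be a metacyclic group with ⟨x⟩ normal in A. Then a subgroup B ≤ A is integrable within A (i.e., B = C' for some C ≤ A) if and only if B ≤ A'. -/
/-!
Since `⟨x⟩` is normal, `y` acts on it by a power map `x ↦ x ^ r`, and every subgroup of `⟨x⟩`
is normal in `A`. If `⟨a⟩` is normal, then modulo the normal subgroup `⟨⁅a, y⁆⟩` the generators of
`⟨a, y⟩` commute, so `⟨a, y⟩' = ⟨⁅a, y⁆⟩`. Hence `A' = ⟨⁅x, y⁆⟩` is cyclic, every `B ≤ A'` is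
`⟨⁅x, y⁆ ^ m⟩`, and `⁅x ^ m, y⁆ = ⁅x, y⁆ ^ m` exhibits `B` as the derived subgroup of `⟨x ^ m, y⟩`.
-/

open scoped commutatorElement

namespace Subgroup

variable {G : Type*} [Group G]

theorem commutator_closure_le_of_normal {S : Set G} {N : Subgroup G} [N.Normal]
    (h : ∀ s ∈ S, ∀ t ∈ S, ⁅s, t⁆ ∈ N) : ⁅closure S, closure S⁆ ≤ N := by
  refine commutator_le.mpr fun g hg k hk => ?_
  induction hg, hk using closure_induction₂ with
  | mem s t hs ht => exact h s hs t ht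
  | one_left => simp
  | one_right => simp
  | mul_left x y z _ _ _ hxz hyz =>
    rw [show ⁅x * y, z⁆ = x * ⁅y, z⁆ * x⁻¹ * ⁅x, z⁆ by group]
    exact mul_mem (‹N.Normal›.conj_mem _ hyz x) hxz
  | mul_right y z x _ _ _ hxy hxz =>
    rw [show ⁅x, y * z⁆ = ⁅x, y⁆ * (y * ⁅x, z⁆ * y⁻¹) by group]
    exact mul_mem hxy (‹N.Normal›.conj_mem _ hxz y)
  | inv_left x y _ _ hxy =>
    rw [show ⁅x⁻¹, y⁆ = x⁻¹ * ⁅x, y⁆⁻¹ * x⁻¹⁻¹ by group]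
    exact ‹N.Normal›.conj_mem _ (inv_mem hxy) x⁻¹
  | inv_right x y _ _ hxy =>
    rw [show ⁅x, y⁻¹⁆ = y⁻¹ * ⁅x, y⁆⁻¹ * y⁻¹⁻¹ by group]
    exact ‹N.Normal›.conj_mem _ (inv_mem hxy) y⁻¹

theorem Normal.zpowers_zpow {x : G} (hx : (zpowers x).Normal) (k : ℤ) :
    (zpowers (x ^ k)).Normal where
  conj_mem := by
    rintro _ ⟨n, rfl⟩ g
    obtain ⟨j, hj⟩ := hx.conj_mem x (mem_zpowers x) g
    refine ⟨j * n, ?_⟩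
    simp only [← zpow_mul, ← conj_zpow, ← hj]
    ring_nf

theorem _root_.commutatorElement_zpow_left {x y : G} (h : y * x * y⁻¹ ∈ zpowers x) (m : ℤ) :
    ⁅x ^ m, y⁆ = ⁅x, y⁆ ^ m := by
  obtain ⟨r, hr⟩ := h
  have hconj (n : ℤ) : ⁅x ^ n, y⁆ = x ^ (n + r * -n) := by
    rw [commutatorElement_def, mul_assoc, mul_assoc, ← mul_assoc y, ← zpow_neg, ← conj_zpow,
      ← hr, ← zpow_mul, zpow_add]
  conv_rhs => rw [← zpow_one x]
  rw [hconj, hconj, ← zpow_mul]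
  ring_nf

theorem commutator_closure_pair_eq_zpowers {a y : G} (ha : (zpowers a).Normal) :
    ⁅closure {a, y}, closure {a, y}⁆ = zpowers ⁅a, y⁆ := by
  have hmem : ⁅a, y⁆ ∈ zpowers a := by
    rw [show ⁅a, y⁆ = a * (y * a⁻¹ * y⁻¹) by group]
    exact mul_mem (mem_zpowers a) (ha.conj_mem _ (inv_mem (mem_zpowers a)) y)
  obtain ⟨k, hk⟩ := hmem
  have : (zpowers ⁅a, y⁆).Normal := hk ▸ ha.zpowers_zpow k
  refine le_antisymm (commutator_closure_le_of_normal ?_) ?_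
  · rintro s (rfl | rfl) t (rfl | rfl)
    · simp
    · exact mem_zpowers _
    · rw [← commutatorElement_inv t s]
      exact inv_mem (mem_zpowers _)
    · simp
  · exact zpowers_le.mpr <| commutator_mem_commutator (subset_closure (by simp))
      (subset_closure (by simp))

end Subgroup

/-- Lemma 2.3: Let `A = ⟨x, y⟩` be metacyclic with `⟨x⟩` normal in `A`.  A subgroup
`B ≤ A` is integrable within `A` iff `B ≤ A'`. -/
theorem stmt2 {A : Type*} [Group A] (x y : A)
    (hgen : Subgroup.closure {x, y} = ⊤)
    (hnorm : (Subgroup.zpowers x).Normal) (B : Subgroup A) :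
    (∃ C : Subgroup A, ⁅C, C⁆ = B) ↔ B ≤ commutator A := by
  refine ⟨fun ⟨C, hC⟩ => hC ▸ Subgroup.commutator_mono le_top le_top, fun hB => ?_⟩
  have hA' : commutator A = Subgroup.zpowers ⁅x, y⁆ := by
    rw [commutator_def, ← hgen, Subgroup.commutator_closure_pair_eq_zpowers hnorm]
  obtain ⟨m, rfl⟩ := (Subgroup.le_zpowers_iff _ B).mp (hA' ▸ hB)
  refine ⟨Subgroup.closure {x ^ (m : ℤ), y}, ?_⟩
  rw [Subgroup.commutator_closure_pair_eq_zpowers (hnorm.zpowers_zpow m),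
    commutatorElement_zpow_left (hnorm.conj_mem x (Subgroup.mem_zpowers x) y), zpow_natCast]
end

section
/- The dihedral group D₈ of order 8 is not isomorphic to the derived subgroup of any group; that is, D₈ is not integrable. -/
/-!
Suppose `H' ≅ D₈` and let `r ∈ H'` correspond to a rotation of order `4`. The elements of `D₈`
whose square is nontrivial all lie in `⟨r⟩`, so `⟨r⟩` is characteristic in `H'` and hence normal
in `H`. Conjugation then maps `H` into `Aut ⟨r⟩`, which is abelian because `⟨r⟩` is cyclic, so
`H'` lies in the kernel, i.e. centralizes `r`. But no reflection of `D₈` commutes with `r`.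
-/

open Subgroup DihedralGroup

theorem Subgroup.commutator_le_centralizer_of_isCyclic {G : Type*} [Group G] (K : Subgroup G)
    [K.Normal] [IsCyclic K] : _root_.commutator G ≤ centralizer (K : Set G) := by
  intro x hx
  have hker : MulAut.conjNormal x = 1 := (IsCyclic.mulAutMulEquiv K).map_eq_one_iff.1 <|
    Abelianization.commutator_subset_ker
      ((IsCyclic.mulAutMulEquiv K).toMonoidHom.comp MulAut.conjNormal) hx
  refine mem_centralizer_iff.2 fun k hk => ?_
  have hconj := congrArg (fun φ : MulAut K => (φ ⟨k, hk⟩ : G)) hker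
  simp only [MulAut.conjNormal_apply, MulAut.one_apply] at hconj
  exact (mul_inv_eq_iff_eq_mul.1 hconj).symm

theorem Subgroup.Characteristic.map_mulEquiv {G G' : Type*} [Group G] [Group G']
    {K : Subgroup G} [K.Characteristic] (e : G ≃* G') :
    (K.map e.toMonoidHom).Characteristic := by
  refine characteristic_iff_map_eq.2 fun φ => ?_
  have h := characteristic_iff_map_eq.1 ‹K.Characteristic› ((e.trans φ).trans e.symm)
  conv_rhs => rw [← h, map_map]
  rw [map_map]
  congr 1
  ext x
  simp

theorem Subgroup.zpowers_characteristic_of_forall_sq_ne_one {G : Type*} [Group G] {g : G}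
    (hg : g ^ 2 ≠ 1) (h : ∀ x : G, x ^ 2 ≠ 1 → x ∈ zpowers g) : (zpowers g).Characteristic := by
  refine characteristic_iff_map_le.2 fun φ => ?_
  rw [MonoidHom.map_zpowers, zpowers_le]
  exact h _ (by simpa [← map_pow] using hg)

theorem DihedralGroup.mem_zpowers_r_one_of_sq_ne_one {n : ℕ} {x : DihedralGroup n}
    (hx : x ^ 2 ≠ 1) : x ∈ zpowers (r 1) := by
  cases x with
  | r i => exact ⟨i.cast, by simp⟩
  | sr i => exact absurd (sr_mul_self i) (by rwa [sq] at hx)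

theorem DihedralGroup.zpowers_r_one_characteristic {n : ℕ} (hn : 2 < n) :
    (zpowers (r 1 : DihedralGroup n)).Characteristic := by
  refine zpowers_characteristic_of_forall_sq_ne_one ?_ fun _ => mem_zpowers_r_one_of_sq_ne_one
  rw [r_one_pow, ← r_zero, Ne, r.injEq, ZMod.natCast_eq_zero_iff]
  exact fun h => hn.not_ge (Nat.le_of_dvd two_pos h)

/-- The dihedral group of order `8` is not integrable: it is not isomorphic to the
derived subgroup of any group. -/
theorem stmt5 : ∀ (H : Type*) [Group H],
    ¬ Nonempty ((commutator H) ≃* DihedralGroup 4) := by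
  rintro H _ ⟨e⟩
  set R := e.symm (r 1)
  have : (zpowers R).Characteristic := by
    rw [show R = e.symm.toMonoidHom (r 1) from rfl, ← MonoidHom.map_zpowers]
    have := zpowers_r_one_characteristic (n := 4) (by norm_num)
    exact Characteristic.map_mulEquiv e.symm
  have : (zpowers (R : H)).Normal := by
    rw [← (commutator H).subtype_apply, ← MonoidHom.map_zpowers]
    infer_instance
  have hcomm := mem_centralizer_iff.1
    (commutator_le_centralizer_of_isCyclic (zpowers (R : H)) (e.symm (sr 0)).2) R (mem_zpowers _)
  have hRS := congrArg e (Subtype.ext hcomm : R * e.symm (sr 0) = e.symm (sr 0) * R)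
  rw [map_mul, map_mul, MulEquiv.apply_symm_apply, MulEquiv.apply_symm_apply] at hRS
  exact absurd hRS (by decide)
end

section
/- Let S be a nonabelian simple group and G with Inn(S) ≤ G ≤ Aut(S), identifying S with Inn(S). Then G is integrable within Aut(S) if and only if G/S is integrable within Out(S) = Aut(S)/Inn(S). -/
/-!
Inner automorphisms form a copy of `S`, which is perfect because it is simple and nonabelian.
For a surjection `π` with perfect kernel, the derived subgroup of `π⁻¹(K)` contains the
kernel and maps onto `⁅K, K⁆`, hence equals `π⁻¹⁅K, K⁆`. So if `G/S = ⁅K, K⁆` then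
`G = ⁅π⁻¹(K), π⁻¹(K)⁆`; the converse direction is just `π ⁅H, H⁆ = ⁅π H, π H⁆`.
-/

instance innRange_normal {S : Type*} [Group S] :
    ((MulAut.conj : S →* MulAut S).range).Normal := by
  constructor
  rintro _ ⟨x, rfl⟩ g
  refine ⟨g x, ?_⟩
  ext s
  simp [mul_assoc]

open Subgroup

theorem IsSimpleGroup.commutator_top_eq_top {S : Type*} [Group S] [IsSimpleGroup S]
    (hna : ¬ ∀ a b : S, a * b = b * a) : ⁅(⊤ : Subgroup S), ⊤⁆ = (⊤ : Subgroup S) := by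
  refine (commutator_normal (⊤ : Subgroup S) ⊤).eq_bot_or_eq_top.resolve_left
    fun hbot => hna fun a b => ?_
  rw [← commutatorElement_eq_one_iff_mul_comm, ← mem_bot, ← hbot]
  exact commutator_mem_commutator (mem_top a) (mem_top b)

theorem MonoidHom.commutator_range_eq_range {G N : Type*} [Group G] [Group N] (f : G →* N)
    (hperf : ⁅(⊤ : Subgroup G), ⊤⁆ = (⊤ : Subgroup G)) : ⁅f.range, f.range⁆ = f.range := by
  rw [f.range_eq_map, ← map_commutator, hperf]

theorem Subgroup.commutator_comap_eq_comap_commutator {G Q : Type*} [Group G] [Group Q]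
    {π : G →* Q} (hπ : Function.Surjective π) (hker : π.ker ≤ ⁅π.ker, π.ker⁆)
    (K : Subgroup Q) : ⁅K.comap π, K.comap π⁆ = ⁅K, K⁆.comap π := by
  have hle : π.ker ≤ K.comap π := π.ker_le_comap K
  have hker_le : π.ker ≤ ⁅K.comap π, K.comap π⁆ := hker.trans (commutator_mono hle hle)
  rw [← comap_map_eq_self hker_le, map_commutator, map_comap_eq_self_of_surjective hπ]

theorem Subgroup.exists_commutator_eq_iff_exists_commutator_eq_map {G Q : Type*} [Group G]
    [Group Q] {π : G →* Q} (hπ : Function.Surjective π) (hker : π.ker ≤ ⁅π.ker, π.ker⁆)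
    {L : Subgroup G} (hL : π.ker ≤ L) :
    (∃ H : Subgroup G, ⁅H, H⁆ = L) ↔ ∃ K : Subgroup Q, ⁅K, K⁆ = L.map π := by
  constructor
  · rintro ⟨H, rfl⟩
    exact ⟨H.map π, (map_commutator H H π).symm⟩
  · rintro ⟨K, hK⟩
    refine ⟨K.comap π, ?_⟩
    rw [commutator_comap_eq_comap_commutator hπ hker, hK, comap_map_eq_self hL]

/-- Lemma 3.2: for `Inn(S) ≤ G ≤ Aut(S)` with `S` nonabelian simple (identifying `S`
with `Inn(S)`), `G` is integrable within `Aut(S)` iff `G/S` is integrable within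
`Out(S) = Aut(S)/Inn(S)`. -/
theorem stmt8 {S : Type*} [Group S] [IsSimpleGroup S]
    (hna : ¬ ∀ a b : S, a * b = b * a)
    (G : Subgroup (MulAut S))
    (hG : (MulAut.conj : S →* MulAut S).range ≤ G) :
    (∃ H : Subgroup (MulAut S), ⁅H, H⁆ = G) ↔
      (∃ K : Subgroup (MulAut S ⧸ (MulAut.conj : S →* MulAut S).range),
        ⁅K, K⁆ = G.map (QuotientGroup.mk' (MulAut.conj : S →* MulAut S).range)) := by
  have hInn := (MulAut.conj : S →* MulAut S).commutator_range_eq_range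
    (IsSimpleGroup.commutator_top_eq_top hna)
  refine exists_commutator_eq_iff_exists_commutator_eq_map
    (QuotientGroup.mk'_surjective _) ?_ (by rwa [QuotientGroup.ker_mk'])
  rw [QuotientGroup.ker_mk', hInn]
end

section
/- If G is a finite group acting 2-transitively and faithfully on a finite set Ω with |Ω| ≥ 2, then G has a unique minimal normal subgroup. -/
/-!
Minimal normal subgroups of a 2-transitive group are transitive. If there were two distinct
ones, `S` and `T`, they would intersect trivially and hence commute; each would centralize the
other, which is transitive, so both act regularly and `S` is the whole centralizer of `T`. Since the
point stabilizer `G_a` acts transitively on `Ω \ {a}`, which the regular normal subgroup `T`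
identifies with `T \ {1}`, all nontrivial elements of `T` are conjugate in `G`, so `T` is a
`p`-group. Its nontrivial center then lies in `T ⊓ centralizer T = T ⊓ S = ⊥`, a contradiction.
-/

namespace Subgroup

variable {G : Type*} [Group G]

def IsMinimalNormal (S : Subgroup G) : Prop :=
  S.Normal ∧ S ≠ ⊥ ∧ ∀ N : Subgroup G, N.Normal → N ≠ ⊥ → N ≤ S → N = S

theorem exists_isMinimalNormal [Finite G] [Nontrivial G] :
    ∃ S : Subgroup G, S.IsMinimalNormal := by
  obtain ⟨S, hS⟩ :=
    exists_minimal_of_wellFoundedLT (fun N : Subgroup G => N.Normal ∧ N ≠ ⊥)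
      ⟨⊤, inferInstance, top_ne_bot⟩
  exact ⟨S, hS.1.1, hS.1.2, fun N hNn hNb hNS => hS.eq_of_le ⟨hNn, hNb⟩ hNS⟩

theorem IsMinimalNormal.disjoint_of_ne {S T : Subgroup G} (hS : S.IsMinimalNormal)
    (hT : T.IsMinimalNormal) (hST : S ≠ T) : Disjoint S T := by
  have := hS.1
  have := hT.1
  refine disjoint_iff.mpr (by_contra fun h => hST ?_)
  exact (hS.2.2 _ inferInstance h inf_le_left).symm.trans (hT.2.2 _ inferInstance h inf_le_right)

theorem IsMinimalNormal.le_centralizer_of_ne {S T : Subgroup G} (hS : S.IsMinimalNormal)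
    (hT : T.IsMinimalNormal) (hST : S ≠ T) : S ≤ centralizer T := fun s hs =>
  mem_centralizer_iff.mpr fun t ht =>
    (commute_of_normal_of_disjoint S T hS.1 hT.1 (hS.disjoint_of_ne hT hST) s t hs ht).symm

theorem exists_isPGroup_of_forall_isConj [Finite G] {T : Subgroup G} (hT : T ≠ ⊥)
    (hconj : ∀ t ∈ T, ∀ t' ∈ T, t ≠ 1 → t' ≠ 1 → IsConj t t') :
    ∃ p, p.Prime ∧ IsPGroup p T := by
  have : Nontrivial T := (nontrivial_iff_ne_bot T).mpr hT
  have hp : (Nat.card T).minFac.Prime := Nat.minFac_prime Finite.one_lt_card.ne'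
  have : Fact (Nat.card T).minFac.Prime := ⟨hp⟩
  obtain ⟨x, hx⟩ := exists_prime_orderOf_dvd_card' _ (Nat.minFac_dvd (Nat.card T))
  refine ⟨_, hp, fun t => ⟨1, ?_⟩⟩
  rcases eq_or_ne t 1 with rfl | ht
  · exact one_pow _
  have hx1 : (x : G) ≠ 1 := by
    intro h
    exact hp.ne_one (by rw [← hx, ← orderOf_coe, h, orderOf_one])
  obtain ⟨c, hc⟩ := hconj x x.2 t t.2 hx1 (by simpa using ht)
  rw [pow_one, ← hx, ← orderOf_coe, hc.orderOf_eq, orderOf_coe, pow_orderOf_eq_one]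

end Subgroup

namespace MulAction

open Subgroup

variable {G Ω : Type*} [Group G] [MulAction G Ω]

theorem eq_of_smul_eq_of_disjoint_stabilizer {K : Subgroup G} {a : Ω}
    (hK : Disjoint K (stabilizer G a)) {k k' : G} (hk : k ∈ K) (hk' : k' ∈ K)
    (h : k • a = k' • a) : k = k' := by
  have hmem : k'⁻¹ * k ∈ stabilizer G a := by
    rw [mem_stabilizer_iff, mul_smul, h, inv_smul_smul]
  exact (inv_mul_eq_one.mp (disjoint_def.mp hK (K.mul_mem (K.inv_mem hk') hk) hmem)).symm

theorem card_le_card_of_disjoint_stabilizer [Finite Ω] {K : Subgroup G} {a : Ω}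
    (hK : Disjoint K (stabilizer G a)) : Nat.card K ≤ Nat.card Ω :=
  Nat.card_le_card_of_injective (fun k : K => (k : G) • a) fun k k' h =>
    Subtype.ext (eq_of_smul_eq_of_disjoint_stabilizer hK k.2 k'.2 h)

theorem card_le_card_of_isPretransitive {H : Type*} [Monoid H] [MulAction H Ω] [Finite H]
    [IsPretransitive H Ω] (a : Ω) : Nat.card Ω ≤ Nat.card H :=
  Nat.card_le_card_of_surjective (fun h : H => h • a) (exists_smul_eq H a)

theorem disjoint_centralizer_stabilizer [FaithfulSMul G Ω] (H : Subgroup G)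
    [IsPretransitive H Ω] (a : Ω) : Disjoint (centralizer H) (stabilizer G a) := by
  refine disjoint_def.mpr fun {c} hc hca => eq_of_smul_eq_smul (α := Ω) fun x => ?_
  obtain ⟨h, rfl⟩ := exists_smul_eq H a x
  rw [one_smul, Subgroup.smul_def, smul_smul, ← mem_centralizer_iff.mp hc h h.2, mul_smul,
    mem_stabilizer_iff.mp hca]

theorem isPretransitive_of_normal_of_ne_bot [IsQuasiPreprimitive G Ω] [FaithfulSMul G Ω]
    {N : Subgroup G} [N.Normal] (hN : N ≠ ⊥) : IsPretransitive N Ω := by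
  refine IsQuasiPreprimitive.isPretransitive_of_normal fun hfix => hN ?_
  refine (eq_bot_iff_forall N).mpr fun n hn => eq_of_smul_eq_smul (α := Ω) fun x => ?_
  have hx : x ∈ fixedPoints N Ω := hfix ▸ Set.mem_univ x
  rw [one_smul]
  exact hx ⟨n, hn⟩

theorem isConj_of_disjoint_stabilizer [IsMultiplyPretransitive G Ω 2] {T : Subgroup G}
    [T.Normal] {a : Ω} (hT : Disjoint T (stabilizer G a)) {t t' : G} (ht : t ∈ T)
    (ht' : t' ∈ T) (ht1 : t ≠ 1) (ht1' : t' ≠ 1) : IsConj t t' := by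
  have hmoves {s : G} (hs : s ∈ T) (hs1 : s ≠ 1) : a ≠ s • a := fun h =>
    hs1 (eq_of_smul_eq_of_disjoint_stabilizer hT hs T.one_mem (by rw [one_smul, ← h]))
  obtain ⟨g, hga, hgt⟩ :=
    is_two_pretransitive_iff.mp ‹_› (hmoves ht ht1) (hmoves ht' ht1')
  have hconj : (g * t * g⁻¹) • a = t' • a := by
    rw [mul_smul, mul_smul, inv_smul_eq_iff.mpr hga.symm, hgt]
  exact isConj_iff.mpr ⟨g, eq_of_smul_eq_of_disjoint_stabilizer hT
    (Normal.conj_mem ‹_› t ht g) ht' hconj⟩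

end MulAction

theorem IsPGroup.inf_centralizer_ne_bot {G : Type*} [Group G] [Finite G] {p : ℕ} [Fact p.Prime]
    {T : Subgroup G} (hT : T ≠ ⊥) (hpT : IsPGroup p T) : T ⊓ Subgroup.centralizer T ≠ ⊥ := by
  have : Nontrivial T := (T.nontrivial_iff_ne_bot).mpr hT
  have := hpT.center_nontrivial
  obtain ⟨z, hz⟩ := exists_ne (1 : Subgroup.center T)
  have hzmem : ((z : T) : G) ∈ T ⊓ Subgroup.centralizer T :=
    ⟨(z : T).2, Subgroup.mem_centralizer_iff.mpr fun t ht =>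
      congrArg Subtype.val ((Subgroup.mem_center_iff.mp z.2) ⟨t, ht⟩)⟩
  refine fun h => hz (Subtype.ext (Subtype.ext ?_))
  rwa [h, Subgroup.mem_bot] at hzmem

open MulAction Subgroup in
theorem Subgroup.IsMinimalNormal.eq_of_isMultiplyPretransitive {G Ω : Type*} [Group G]
    [Finite G] [Finite Ω] [Nonempty Ω] [MulAction G Ω] [FaithfulSMul G Ω]
    [IsMultiplyPretransitive G Ω 2] {S T : Subgroup G} (hS : S.IsMinimalNormal)
    (hT : T.IsMinimalNormal) : S = T := by
  by_contra hST
  obtain ⟨a⟩ := ‹Nonempty Ω›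
  have := isPreprimitive_of_is_two_pretransitive (G := G) (α := Ω) ‹_›
  have := hS.1
  have := hT.1
  have : IsPretransitive S Ω := isPretransitive_of_normal_of_ne_bot hS.2.1
  have : IsPretransitive T Ω := isPretransitive_of_normal_of_ne_bot hT.2.1
  have hSC : S = centralizer T := eq_of_le_of_card_ge (hS.le_centralizer_of_ne hT hST) <|
    (card_le_card_of_disjoint_stabilizer (disjoint_centralizer_stabilizer T a)).trans
      (card_le_card_of_isPretransitive a)
  have hTa : Disjoint T (stabilizer G a) :=
    (disjoint_centralizer_stabilizer S a).mono_left (hT.le_centralizer_of_ne hS (Ne.symm hST))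
  obtain ⟨p, hp, hpT⟩ := exists_isPGroup_of_forall_isConj hT.2.1 fun t ht t' ht' ht1 ht1' =>
    isConj_of_disjoint_stabilizer hTa ht ht' ht1 ht1'
  have : Fact p.Prime := ⟨hp⟩
  apply hpT.inf_centralizer_ne_bot hT.2.1
  rw [← hSC, inf_comm]
  exact disjoint_iff.mp (hS.disjoint_of_ne hT hST)

/-- If a finite group `G` acts 2-transitively and faithfully on a finite set `Ω` with
`|Ω| ≥ 2`, then `G` has a unique minimal normal subgroup. -/
theorem stmt17 {G Ω : Type*} [Group G] [Finite G] [Finite Ω]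
    [MulAction G Ω] [FaithfulSMul G Ω] (hΩ : 2 ≤ Nat.card Ω)
    (h2trans : ∀ a b c d : Ω, a ≠ b → c ≠ d →
      ∃ g : G, g • a = c ∧ g • b = d) :
    ∃! S : Subgroup G, (S.Normal ∧ S ≠ ⊥ ∧
      ∀ N : Subgroup G, N.Normal → N ≠ ⊥ → N ≤ S → N = S) := by
  have : MulAction.IsMultiplyPretransitive G Ω 2 :=
    MulAction.is_two_pretransitive_iff.mpr fun hab hcd => h2trans _ _ _ _ hab hcd
  have : Nontrivial Ω := Finite.one_lt_card_iff_nontrivial.mp hΩ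
  obtain ⟨a, b, hab⟩ := exists_pair_ne Ω
  have : Nontrivial G := by
    obtain ⟨g, hg, -⟩ := h2trans a b b a hab hab.symm
    exact ⟨⟨g, 1, fun h => hab (by rw [← hg, h, one_smul])⟩⟩
  obtain ⟨S, hS⟩ := Subgroup.exists_isMinimalNormal (G := G)
  exact ⟨S, hS, fun T hT => Subgroup.IsMinimalNormal.eq_of_isMultiplyPretransitive (Ω := Ω) hT hS⟩
end
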